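/- arXiv:1406.0717 — 3 statements merged into one kernel-verified Lean document; each statement's English description precedes it below -/
import Mathlib

section
/- Fractional integration by parts (order α ∈ (0,1)): for C¹ functions x, y : [a,b] → ℝ, one has ∫ₐᵇ y(t)·(ᶜₐD_t^α x)(t) dt = ∫ₐᵇ x(t)·(ₜD_b^α y)(t) dt + [ (ₜI_b^{1−α} y)(t) · x(t) ]ₐᵇ, provided all the fractional operators involved are well defined and continuous on [a,b]. -/
/-!
Write `I s = ∫ τ in s..b, (τ - s) ^ (-α) * y τ`, so that `ₜI_b^{1-α} y = I / Γ(1-α)` and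
`ₜD_b^α y = -I' / Γ(1-α)`. Exchanging the order of integration over the triangle
`a < τ < t < b` (Dirichlet's formula) turns the left-hand side into `∫ (ₜI_b^{1-α} y) x'`, and
ordinary integration by parts against `x` finishes the proof.

The real work is the differentiability of `I` on `(a, b)`, with an integrable derivative.
Integrating by parts in `τ` and applying Dirichlet's formula once more gives
`I s = (b - s) ^ (1 - α) * y b / (1 - α) - ∫ σ in s..b, E σ` with
`E σ = ∫ τ in σ..b, (τ - σ) ^ (-α) * y' τ`, and `E` is continuous on `[a, b]` by dominated
convergence, since after the shift `τ = σ + u` only the upper limit of integration moves.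
-/

/-- Left Caputo fractional derivative of order `α ∈ (0,1)` with base point `a`. -/
noncomputable def caputoDeriv (a α : ℝ) (x : ℝ → ℝ) (t : ℝ) : ℝ :=
  (1 / Real.Gamma (1 - α)) * ∫ τ in a..t, (t - τ) ^ (-α) * deriv x τ

/-- Right Riemann–Liouville fractional integral of order `β > 0` with base point `b`. -/
noncomputable def rlIntRight (b β : ℝ) (x : ℝ → ℝ) (t : ℝ) : ℝ :=
  (1 / Real.Gamma β) * ∫ τ in t..b, (τ - t) ^ (β - 1) * x τ

/-- Right Riemann–Liouville fractional derivative of order `α ∈ (0,1)`. -/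
noncomputable def rlDerivRight (b α : ℝ) (x : ℝ → ℝ) (t : ℝ) : ℝ :=
  -((1 / Real.Gamma (1 - α)) *
    deriv (fun s => ∫ τ in s..b, (τ - s) ^ (-α) * x τ) t)

open MeasureTheory Set intervalIntegral Filter Topology

lemma ContDiffOn.hasDerivAt_derivWithin_Icc {a b t : ℝ} {f : ℝ → ℝ}
    (hf : ContDiffOn ℝ 1 f (Icc a b)) (ht : t ∈ Ioo a b) :
    HasDerivAt f (derivWithin f (Icc a b) t) t := by
  have hmem : Icc a b ∈ 𝓝 t := Icc_mem_nhds ht.1 ht.2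
  rw [derivWithin_of_mem_nhds hmem]
  exact ((hf.differentiableOn one_ne_zero t (Ioo_subset_Icc_self ht)).differentiableAt
    hmem).hasDerivAt

section RpowKernel

variable {r : ℝ}

lemma intervalIntegrable_sub_rpow (hr : -1 < r) (s c : ℝ) :
    IntervalIntegrable (fun τ => (τ - s) ^ r) volume s c := by
  simpa using (intervalIntegrable_rpow' (a := 0) (b := c - s) hr).comp_sub_right s

lemma intervalIntegrable_rpow_sub (hr : -1 < r) (s c : ℝ) :
    IntervalIntegrable (fun τ => (c - τ) ^ r) volume s c := by
  simpa using ((intervalIntegrable_rpow' (a := 0) (b := c - s) hr).comp_sub_left c).symm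

lemma integral_rpow_sub (hr : -1 < r) (s t : ℝ) :
    ∫ τ in s..t, (t - τ) ^ r = (t - s) ^ (r + 1) / (r + 1) := by
  rw [integral_comp_sub_left (fun u => u ^ r), sub_self, integral_rpow (Or.inl hr),
    Real.zero_rpow (by linarith), sub_zero]

end RpowKernel

section Dirichlet

variable {a b r : ℝ}

lemma setIntegral_Ioc_indicator_Iio {t : ℝ} (ht : t ∈ Icc a b) (f : ℝ → ℝ) :
    ∫ τ in Ioc a b, (Iio t).indicator f τ = ∫ τ in a..t, f τ := by
  rw [setIntegral_indicator measurableSet_Iio, integral_of_le ht.1,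
    show Ioc a b ∩ Iio t = Ioo a t by ext; simp; grind, integral_Ioc_eq_integral_Ioo]

lemma setIntegral_Ioc_indicator_Ioi {τ : ℝ} (hτ : τ ∈ Icc a b) (f : ℝ → ℝ) :
    ∫ t in Ioc a b, (Ioi τ).indicator f t = ∫ t in τ..b, f t := by
  rw [setIntegral_indicator measurableSet_Ioi, integral_of_le hτ.2,
    Ioc_inter_Ioi, sup_eq_right.2 hτ.1]

lemma integrable_indicator_lt_rpow_sub (hab : a ≤ b) (hr : -1 < r) :
    Integrable ({p : ℝ × ℝ | p.2 < p.1}.indicator fun p => (p.1 - p.2) ^ r)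
      ((volume.restrict (Ioc a b)).prod (volume.restrict (Ioc a b))) := by
  have hsection : ∀ t τ, {p : ℝ × ℝ | p.2 < p.1}.indicator (fun p => (p.1 - p.2) ^ r) (t, τ)
      = (Iio t).indicator (fun τ => (t - τ) ^ r) τ := fun t τ => by
    simp [indicator_apply]
  have hmeas : Measurable ({p : ℝ × ℝ | p.2 < p.1}.indicator fun p => (p.1 - p.2) ^ r) :=
    ((measurable_fst.sub measurable_snd).pow_const r).indicator
      (measurableSet_lt measurable_snd measurable_fst)
  have hker : ∀ t ∈ Ioc a b,
      IntegrableOn (fun τ => (t - τ) ^ r) (Iio t) (volume.restrict (Ioc a b)) := by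
    intro t ht
    rw [IntegrableOn, Measure.restrict_restrict measurableSet_Iio]
    refine IntegrableOn.mono_set ?_ (fun τ hτ => ⟨hτ.2.1, hτ.1.le⟩ : Iio t ∩ Ioc a b ⊆ Ioc a t)
    exact (intervalIntegrable_iff_integrableOn_Ioc_of_le ht.1.le).1
      (intervalIntegrable_rpow_sub hr a t)
  have hnorm : ∀ t ∈ Ioc a b, ∫ τ in Ioc a b, ‖(Iio t).indicator (fun τ => (t - τ) ^ r) τ‖
      = (t - a) ^ (r + 1) / (r + 1) := by
    intro t ht
    rw [← integral_rpow_sub hr a t, ← setIntegral_Ioc_indicator_Iio ⟨ht.1.le, ht.2⟩]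
    refine setIntegral_congr_fun measurableSet_Ioc fun τ _ => ?_
    rw [norm_indicator_eq_indicator_norm]
    exact congrFun (indicator_congr fun τ hτ =>
      Real.norm_of_nonneg (Real.rpow_nonneg (sub_nonneg.2 (le_of_lt hτ)) r)) τ
  rw [integrable_prod_iff hmeas.aestronglyMeasurable]
  simp only [hsection]
  constructor
  · filter_upwards [ae_restrict_mem measurableSet_Ioc] with t ht
    exact (integrable_indicator_iff measurableSet_Iio).2 (hker t ht)
  · have hcont : Continuous fun t : ℝ => (t - a) ^ (r + 1) / (r + 1) :=
      ((continuous_id.sub continuous_const).rpow_const fun _ => Or.inr (by linarith)).div_const _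
    refine ((intervalIntegrable_iff_integrableOn_Ioc_of_le hab).1
      (hcont.intervalIntegrable a b)).congr ?_
    filter_upwards [ae_restrict_mem measurableSet_Ioc] with t ht
    exact (hnorm t ht).symm

theorem integral_mul_integral_rpow_sub_comm (hab : a ≤ b) (hr : -1 < r) {φ ψ : ℝ → ℝ}
    (hφ : ContinuousOn φ (Icc a b)) (hψ : ContinuousOn ψ (Icc a b)) :
    ∫ t in a..b, φ t * ∫ τ in a..t, (t - τ) ^ r * ψ τ
      = ∫ τ in a..b, ψ τ * ∫ t in τ..b, (t - τ) ^ r * φ t := by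
  set μ := volume.restrict (Ioc a b)
  set k := {p : ℝ × ℝ | p.2 < p.1}.indicator fun p => (p.1 - p.2) ^ r
  obtain ⟨Φ, hΦ⟩ := isCompact_Icc.exists_bound_of_continuousOn hφ
  obtain ⟨Ψ, hΨ⟩ := isCompact_Icc.exists_bound_of_continuousOn hψ
  have hφμ : AEStronglyMeasurable φ μ := (hφ.mono Ioc_subset_Icc_self).aestronglyMeasurable
    measurableSet_Ioc
  have hψμ : AEStronglyMeasurable ψ μ := (hψ.mono Ioc_subset_Icc_self).aestronglyMeasurable
    measurableSet_Ioc
  have hint : Integrable (Function.uncurry fun t τ => k (t, τ) * (φ t * ψ τ)) (μ.prod μ) := by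
    refine (integrable_indicator_lt_rpow_sub hab hr).mul_bdd (c := Φ * Ψ)
      (hφμ.comp_fst.mul hψμ.comp_snd) ?_
    rw [Measure.prod_restrict]
    filter_upwards [ae_restrict_mem (measurableSet_Ioc.prod measurableSet_Ioc)] with p hp
    rw [norm_mul]
    exact mul_le_mul (hΦ _ (Ioc_subset_Icc_self hp.1)) (hΨ _ (Ioc_subset_Icc_self hp.2))
      (norm_nonneg _) ((norm_nonneg _).trans (hΦ _ (Ioc_subset_Icc_self hp.1)))
  rw [integral_of_le hab, integral_of_le hab]
  convert integral_integral_swap hint using 1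
  · refine setIntegral_congr_fun measurableSet_Ioc fun t ht => ?_
    rw [← intervalIntegral.integral_const_mul,
      ← setIntegral_Ioc_indicator_Iio (Ioc_subset_Icc_self ht)]
    refine setIntegral_congr_fun measurableSet_Ioc fun τ _ => ?_
    simp only [k, indicator_apply, mem_ofPred_eq, mem_Iio]
    split_ifs <;> ring
  · refine setIntegral_congr_fun measurableSet_Ioc fun τ hτ => ?_
    rw [← intervalIntegral.integral_const_mul,
      ← setIntegral_Ioc_indicator_Ioi (Ioc_subset_Icc_self hτ)]
    refine setIntegral_congr_fun measurableSet_Ioc fun t _ => ?_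
    simp only [k, indicator_apply, mem_ofPred_eq, mem_Ioi]
    split_ifs <;> ring

end Dirichlet

section RightFractionalIntegral

variable {r : ℝ}

lemma integral_sub_rpow_mul_eq_integral_rpow_mul (h : ℝ → ℝ) (s b : ℝ) :
    ∫ τ in s..b, (τ - s) ^ r * h τ = ∫ u in 0..b - s, u ^ r * h (u + s) := by
  simpa using integral_comp_sub_right (a := s) (b := b) (fun u => u ^ r * h (u + s)) s

theorem continuous_integral_sub_rpow_mul (hr : -1 < r) {h : ℝ → ℝ} (hh : Continuous h)
    (b : ℝ) : Continuous fun s => ∫ τ in s..b, (τ - s) ^ r * h τ := by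
  simp only [integral_sub_rpow_mul_eq_integral_rpow_mul]
  refine continuous_iff_continuousAt.2 fun s₀ => ?_
  set R := |b - s₀| + 1
  have hR : |b - s₀| < R := lt_add_one _
  obtain ⟨C, hC⟩ := (isCompact_closedBall s₀ (R + 1)).exists_bound_of_continuousOn hh.continuousOn
  have hbound : ∀ᶠ s in 𝓝 s₀, ∀ᵐ u ∂volume.restrict (uIoc (-R) R),
      ‖u ^ r * h (u + s)‖ ≤ ‖u ^ r‖ * C := by
    filter_upwards [Metric.ball_mem_nhds s₀ one_pos] with s hs
    filter_upwards [ae_restrict_mem measurableSet_uIoc] with u hu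
    rw [uIoc_of_le (by linarith [abs_nonneg (b - s₀)])] at hu
    rw [norm_mul]
    refine mul_le_mul_of_nonneg_left (hC _ ?_) (norm_nonneg _)
    rw [Metric.mem_ball, Real.dist_eq] at hs
    rw [Metric.mem_closedBall, Real.dist_eq, abs_le]
    constructor <;> linarith [abs_lt.1 hs, hu.1, hu.2]
  have hcont := continuousAt_parametric_primitive_of_dominated
    (F := fun s u => u ^ r * h (u + s)) (x₀ := s₀) (a₀ := 0) (b₀ := b - s₀)
    (fun u => ‖u ^ r‖ * C) (-R) R
    (fun s => ((measurable_id.pow_const r).mul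
      (hh.comp (continuous_add_const s)).measurable).aestronglyMeasurable)
    hbound ((intervalIntegrable_rpow' hr).norm.mul_const C)
    (ae_of_all _ fun u => by fun_prop) (by constructor <;> linarith [abs_nonneg (b - s₀)])
    (abs_lt.1 hR) (by simp)
  exact hcont.comp (f := fun s => (s, b - s)) (by fun_prop)

theorem continuousOn_integral_sub_rpow_mul (hr : -1 < r) {a b : ℝ} (hab : a ≤ b) {h : ℝ → ℝ}
    (hh : ContinuousOn h (Icc a b)) :
    ContinuousOn (fun s => ∫ τ in s..b, (τ - s) ^ r * h τ) (Icc a b) := by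
  have hext : Continuous fun t => h (projIcc a b hab t) :=
    hh.comp_continuous (continuous_subtype_val.comp continuous_projIcc) fun t =>
      (projIcc a b hab t).2
  refine (continuous_integral_sub_rpow_mul hr hext b).continuousOn.congr fun s hs => ?_
  refine integral_congr fun τ hτ => ?_
  rw [uIcc_of_le hs.2] at hτ
  simp [projIcc_of_mem hab ⟨hs.1.trans hτ.1, hτ.2⟩]

end RightFractionalIntegral

section RightFractionalDerivative

variable {a b r : ℝ} {y y' : ℝ → ℝ}

lemma integral_sub_rpow_mul_eq_sub_integral (hr : -1 < r) {s : ℝ} (hs : s ∈ Icc a b)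
    (hy : ContinuousOn y (Icc a b)) (hy' : ContinuousOn y' (Icc a b))
    (hderiv : ∀ t ∈ Ioo a b, HasDerivAt y (y' t) t) :
    (r + 1) * ∫ τ in s..b, (τ - s) ^ r * y τ
      = (b - s) ^ (r + 1) * y b - ∫ τ in s..b, (τ - s) ^ (r + 1) * y' τ := by
  have hr1 : 0 < r + 1 := by linarith
  have hsub : uIcc s b ⊆ Icc a b := by rw [uIcc_of_le hs.2]; exact Icc_subset_Icc_left hs.1
  have hparts := integral_mul_deriv_eq_deriv_mul_of_hasDerivAt
    (u := fun τ => (τ - s) ^ (r + 1)) (u' := fun τ => (r + 1) * (τ - s) ^ r) (v := y) (v' := y')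
    ((continuous_id.sub continuous_const).rpow_const fun _ => Or.inr hr1.le).continuousOn
    (hy.mono hsub)
    (fun τ hτ => ?_) (fun τ hτ => ?_) ((intervalIntegrable_sub_rpow hr s b).const_mul _)
    ((hy'.mono hsub).intervalIntegrable)
  · rw [hparts, sub_self, Real.zero_rpow hr1.ne', ← intervalIntegral.integral_const_mul]
    simp only [zero_mul, sub_zero, mul_assoc, sub_sub_cancel]
  · rw [min_eq_left hs.2, max_eq_right hs.2] at hτ
    simpa using ((hasDerivAt_id τ).sub_const s).rpow_const (p := r + 1)
      (Or.inl (sub_pos.2 hτ.1).ne')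
  · rw [min_eq_left hs.2, max_eq_right hs.2] at hτ
    exact hderiv τ ⟨hs.1.trans_lt hτ.1, hτ.2⟩

lemma integral_sub_rpow_add_one_mul (hr : -1 < r) {s : ℝ} (hsb : s ≤ b) {h : ℝ → ℝ}
    (hh : ContinuousOn h (Icc s b)) :
    ∫ τ in s..b, (τ - s) ^ (r + 1) * h τ
      = (r + 1) * ∫ σ in s..b, ∫ τ in σ..b, (τ - σ) ^ r * h τ := by
  have hr1 : r + 1 ≠ 0 := by linarith
  have hswap := integral_mul_integral_rpow_sub_comm hsb hr hh (continuousOn_const (c := (1 : ℝ)))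
  simp only [mul_one, one_mul, integral_rpow_sub hr] at hswap
  rw [← hswap, ← intervalIntegral.integral_const_mul]
  refine integral_congr fun τ _ => ?_
  field_simp

theorem hasDerivAt_integral_sub_rpow_mul (hr : -1 < r) {t : ℝ} (ht : t ∈ Ioo a b)
    (hy : ContinuousOn y (Icc a b)) (hy' : ContinuousOn y' (Icc a b))
    (hderiv : ∀ τ ∈ Ioo a b, HasDerivAt y (y' τ) τ) :
    HasDerivAt (fun s => ∫ τ in s..b, (τ - s) ^ r * y τ)
      ((∫ τ in t..b, (τ - t) ^ r * y' τ) - (b - t) ^ r * y b) t := by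
  set E := fun σ => ∫ τ in σ..b, (τ - σ) ^ r * y' τ
  have hr1 : r + 1 ≠ 0 := by linarith
  have hE : ContinuousOn E (Icc a b) :=
    continuousOn_integral_sub_rpow_mul hr (ht.1.trans ht.2).le hy'
  have hrepr : ∀ s ∈ Icc a b, ∫ τ in s..b, (τ - s) ^ r * y τ
      = (b - s) ^ (r + 1) * y b / (r + 1) - ∫ σ in s..b, E σ := by
    intro s hs
    have hparts := integral_sub_rpow_mul_eq_sub_integral hr hs hy hy' hderiv
    rw [integral_sub_rpow_add_one_mul hr hs.2 (hy'.mono (Icc_subset_Icc_left hs.1))] at hparts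
    field_simp
    linarith
  have hpow : HasDerivAt (fun s => (b - s) ^ (r + 1) * y b / (r + 1)) (-((b - t) ^ r * y b)) t := by
    have := ((((hasDerivAt_id t).const_sub b).rpow_const (p := r + 1)
      (Or.inl (sub_pos.2 ht.2).ne')).mul_const (y b)).div_const (r + 1)
    simp only [id, add_sub_cancel_right] at this
    exact this.congr_deriv (by field_simp)
  have hint : HasDerivAt (fun s => ∫ σ in s..b, E σ) (-E t) t :=
    integral_hasDerivAt_left
      ((hE.mono (by rw [uIcc_of_le ht.2.le]; exact Icc_subset_Icc_left ht.1.le)).intervalIntegrable)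
      ((hE.mono Ioo_subset_Icc_self).stronglyMeasurableAtFilter isOpen_Ioo t ht)
      (hE.continuousAt (Icc_mem_nhds ht.1 ht.2))
  exact ((hpow.sub hint).congr_of_eventuallyEq
    (eventually_of_mem (Icc_mem_nhds ht.1 ht.2) hrepr)).congr_deriv (neg_sub_neg _ _)

end RightFractionalDerivative

section FractionalOperators

variable {a b α : ℝ} {x x' y y' : ℝ → ℝ}

lemma rlIntRight_one_sub (b α : ℝ) (y : ℝ → ℝ) :
    rlIntRight b (1 - α) y
      = fun t => 1 / Real.Gamma (1 - α) * ∫ τ in t..b, (τ - t) ^ (-α) * y τ := by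
  funext t
  simp [rlIntRight, sub_sub_cancel_left]

lemma continuousOn_rlIntRight {β : ℝ} (hβ : 0 < β) (hab : a ≤ b)
    (hy : ContinuousOn y (Icc a b)) : ContinuousOn (rlIntRight b β y) (Icc a b) :=
  continuousOn_const.mul (continuousOn_integral_sub_rpow_mul (by linarith) hab hy)

lemma hasDerivAt_rlIntRight_one_sub (hα : α < 1) {t : ℝ} (ht : t ∈ Ioo a b)
    (hy : ContinuousOn y (Icc a b)) (hy' : ContinuousOn y' (Icc a b))
    (hderiv : ∀ τ ∈ Ioo a b, HasDerivAt y (y' τ) τ) :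
    HasDerivAt (rlIntRight b (1 - α) y) (-rlDerivRight b α y t) t := by
  have hG := hasDerivAt_integral_sub_rpow_mul (r := -α) (by linarith) ht hy hy' hderiv
  rw [rlIntRight_one_sub, rlDerivRight, hG.deriv, neg_neg]
  exact hG.const_mul _

lemma intervalIntegrable_rlDerivRight (hα : α < 1) (hab : a ≤ b)
    (hy : ContinuousOn y (Icc a b)) (hy' : ContinuousOn y' (Icc a b))
    (hderiv : ∀ τ ∈ Ioo a b, HasDerivAt y (y' τ) τ) :
    IntervalIntegrable (rlDerivRight b α y) volume a b := by
  have hformula : EqOn (fun t => -(1 / Real.Gamma (1 - α) *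
      ((∫ τ in t..b, (τ - t) ^ (-α) * y' τ) - (b - t) ^ (-α) * y b)))
      (rlDerivRight b α y) (Ioo a b) := fun t ht => by
    rw [rlDerivRight, (hasDerivAt_integral_sub_rpow_mul (by linarith) ht hy hy' hderiv).deriv]
  rw [intervalIntegrable_iff_integrableOn_Ioo_of_le hab]
  refine IntegrableOn.congr_fun ?_ hformula measurableSet_Ioo
  rw [← intervalIntegrable_iff_integrableOn_Ioo_of_le hab]
  refine ((IntervalIntegrable.sub ?_ ?_).const_mul _).neg
  · exact (continuousOn_integral_sub_rpow_mul (by linarith) hab hy').intervalIntegrable_of_Icc hab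
  · exact (intervalIntegrable_rpow_sub (by linarith) a b).mul_const _

theorem integral_mul_caputoDeriv (hab : a ≤ b) (hα : α < 1) (hx' : ContinuousOn x' (Icc a b))
    (hderiv : ∀ t ∈ Ioo a b, HasDerivAt x (x' t) t) (hy : ContinuousOn y (Icc a b)) :
    ∫ t in a..b, y t * caputoDeriv a α x t = ∫ t in a..b, rlIntRight b (1 - α) y t * x' t := by
  have hcaputo : ∀ t ∈ Icc a b,
      caputoDeriv a α x t = 1 / Real.Gamma (1 - α) * ∫ τ in a..t, (t - τ) ^ (-α) * x' τ := by
    intro t ht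
    rw [caputoDeriv, integral_of_le ht.1, integral_of_le ht.1, integral_Ioc_eq_integral_Ioo,
      integral_Ioc_eq_integral_Ioo]
    congr 1
    exact setIntegral_congr_fun measurableSet_Ioo fun τ hτ => by
      rw [(hderiv τ ⟨hτ.1, hτ.2.trans_le ht.2⟩).deriv]
  calc ∫ t in a..b, y t * caputoDeriv a α x t
      = 1 / Real.Gamma (1 - α) * ∫ t in a..b, y t * ∫ τ in a..t, (t - τ) ^ (-α) * x' τ := by
        rw [← intervalIntegral.integral_const_mul]
        refine integral_congr fun t ht => ?_
        rw [uIcc_of_le hab] at ht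
        rw [hcaputo t ht]
        ring
    _ = 1 / Real.Gamma (1 - α) * ∫ τ in a..b, x' τ * ∫ t in τ..b, (t - τ) ^ (-α) * y t := by
        rw [integral_mul_integral_rpow_sub_comm hab (by linarith) hy hx']
    _ = ∫ t in a..b, rlIntRight b (1 - α) y t * x' t := by
        rw [rlIntRight_one_sub, ← intervalIntegral.integral_const_mul]
        refine integral_congr fun t _ => ?_
        ring

end FractionalOperators

theorem fractional_integration_by_parts_general (a b α : ℝ) (hab : a < b)
    (hα : α ∈ Set.Ioo (0:ℝ) 1) (x y : ℝ → ℝ)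
    (hx : ContDiffOn ℝ 1 x (Set.Icc a b)) (hy : ContDiffOn ℝ 1 y (Set.Icc a b)) :
    ∫ t in a..b, y t * caputoDeriv a α x t
      = (∫ t in a..b, x t * rlDerivRight b α y t)
        + (rlIntRight b (1 - α) y b * x b - rlIntRight b (1 - α) y a * x a) := by
  have hx' := hx.continuousOn_derivWithin (uniqueDiffOn_Icc hab) le_rfl
  have hy' := hy.continuousOn_derivWithin (uniqueDiffOn_Icc hab) le_rfl
  have hxd := fun t (ht : t ∈ Ioo a b) => hx.hasDerivAt_derivWithin_Icc ht
  have hyd := fun t (ht : t ∈ Ioo a b) => hy.hasDerivAt_derivWithin_Icc ht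
  rw [integral_mul_caputoDeriv hab.le hα.2 hx' hxd hy.continuousOn,
    integral_mul_deriv_eq_deriv_mul_of_hasDerivAt (u' := fun t => -rlDerivRight b α y t)
      (by rw [uIcc_of_le hab.le]
          exact continuousOn_rlIntRight (by linarith [hα.2]) hab.le hy.continuousOn)
      (by rw [uIcc_of_le hab.le]; exact hx.continuousOn)
      (fun t ht => ?_) (fun t ht => ?_)
      (intervalIntegrable_rlDerivRight hα.2 hab.le hy.continuousOn hy' hyd).neg
      (hx'.intervalIntegrable_of_Icc hab.le)]
  · simp only [neg_mul, intervalIntegral.integral_neg, sub_neg_eq_add,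
      mul_comm (rlDerivRight b α y _)]
    ring
  · rw [min_eq_left hab.le, max_eq_right hab.le] at ht
    exact hasDerivAt_rlIntRight_one_sub hα.2 ht hy.continuousOn hy' hyd
  · rw [min_eq_left hab.le, max_eq_right hab.le] at ht
    exact hxd t ht

/-- Fractional integration by parts for `α ∈ (0,1)`. -/
theorem fractional_integration_by_parts (a b α : ℝ) (hab : a < b)
    (hα : α ∈ Set.Ioo (0:ℝ) 1) (x y : ℝ → ℝ)
    (hx : ContDiffOn ℝ 1 x (Set.Icc a b)) (hy : ContDiffOn ℝ 1 y (Set.Icc a b))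
    (hcx : ContinuousOn (caputoDeriv a α x) (Set.Icc a b))
    (hdy : ContinuousOn (rlDerivRight b α y) (Set.Icc a b))
    (hiy : ContinuousOn (rlIntRight b (1 - α) y) (Set.Icc a b)) :
    ∫ t in a..b, y t * caputoDeriv a α x t
      = (∫ t in a..b, x t * rlDerivRight b α y t)
        + (rlIntRight b (1 - α) y b * x b - rlIntRight b (1 - α) y a * x a) :=
  fractional_integration_by_parts_general a b α hab hα x y hx hy
end

section
/- For the Lagrangian L(t,x,v,z) = f(v) − γ z with f ∈ C¹ and γ > 0, invariance under the translations x̄ = x + c (c ∈ ℝ) holds, and along any solution of ₜD_b^α( e^{γt} f′(ᶜₐD_t^α x(t)) ) = 0 the Noether identity 𝒟^α[ e^{γt} f′(ᶜₐD_t^α x), c ] = 0 is equivalent to d/dt ( ₜI_b^{1−α}( e^{γt} f′(ᶜₐD_t^α x) ) ) = 0, i.e., the quantity ₜI_b^{1−α}( e^{γt} f′(ᶜₐD_t^α x) ) is constant in t. -/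
/-- The bilinear Noether operator `𝒟^α[f,g] = f·ᶜₐD^α g − g·ₜD_b^α f`. -/
noncomputable def noetherOp (a b α : ℝ) (f g : ℝ → ℝ) (t : ℝ) : ℝ :=
  f t * caputoDeriv a α g t - g t * rlDerivRight b α f t

/-- For the Lagrangian `L = f(v) − γz` (so `λ(t) = e^{γt}`), translations
`x̄ = x + c` leave the Caputo derivative invariant, and along any solution of
`ₜD_b^α(e^{γt} f'(ᶜD^α x)) = 0` the Noether identity holds and is equivalent to
the constancy of `ₜI_b^{1−α}(e^{γt} f'(ᶜD^α x))`. -/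
theorem noether_example_dissipative (a b α γ : ℝ) (hab : a < b)
    (hα : α ∈ Set.Ioo (0:ℝ) 1) (hγ : 0 < γ)
    (f : ℝ → ℝ) (hf : ContDiff ℝ 1 f)
    (x : ℝ → ℝ) (hx : ContDiffOn ℝ 1 x (Set.Icc a b))
    (F : ℝ → ℝ)
    (hF : ∀ t, F t = Real.exp (γ * t) * deriv f (caputoDeriv a α x t))
    -- `x` solves the Euler–Lagrange equation
    (hEL : ∀ t ∈ Set.Icc a b, rlDerivRight b α F t = 0)
    -- the identity `ₜD_b^α = −(d/dt) ∘ ₜI_b^{1−α}`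
    (hid : ∀ t ∈ Set.Ioo a b,
      rlDerivRight b α F t = -deriv (fun s => rlIntRight b (1 - α) F s) t)
    (hIc : ContinuousOn (fun s => rlIntRight b (1 - α) F s) (Set.Icc a b))
    (hId : DifferentiableOn ℝ (fun s => rlIntRight b (1 - α) F s) (Set.Ioo a b)) :
    -- invariance under translations
    (∀ c : ℝ, ∀ t ∈ Set.Ioc a b,
      caputoDeriv a α (fun s => x s + c) t = caputoDeriv a α x t) ∧
    -- the Noether identity, equivalently `d/dt (ₜI_b^{1−α} F) = 0`
    (∀ c : ℝ, ∀ t ∈ Set.Ioo a b,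
      (noetherOp a b α F (fun _ => c) t = 0 ↔
        deriv (fun s => rlIntRight b (1 - α) F s) t = 0)) ∧
    -- hence `ₜI_b^{1−α} F` is constant
    (∀ t₁ ∈ Set.Icc a b, ∀ t₂ ∈ Set.Icc a b,
      rlIntRight b (1 - α) F t₁ = rlIntRight b (1 - α) F t₂) := by
  have hderiv0 : ∀ t ∈ Set.Ioo a b,
      deriv (fun s => rlIntRight b (1 - α) F s) t = 0 := by
    intro t ht
    have h1 := hid t ht
    have h2 := hEL t (Set.Ioo_subset_Icc_self ht)
    rw [h2] at h1
    linarith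
  refine ⟨?_, ?_, ?_⟩
  · intro c t _
    unfold caputoDeriv
    congr 1
    refine intervalIntegral.integral_congr fun τ _ => ?_
    simp [deriv_add_const]
  · intro c t ht
    constructor
    · intro _; exact hderiv0 t ht
    · intro _
      unfold noetherOp caputoDeriv
      have hC : deriv (fun _ : ℝ => c) = fun _ => 0 := by
        funext s; simp
      rw [hC]
      simp [hEL t (Set.Ioo_subset_Icc_self ht)]
  · intro t₁ ht₁ t₂ ht₂
    have hint : interior (Set.Icc a b) = Set.Ioo a b := interior_Icc
    have hd : DifferentiableOn ℝ (fun s => rlIntRight b (1 - α) F s)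
        (interior (Set.Icc a b)) := by rw [hint]; exact hId
    have hmono : MonotoneOn (fun s => rlIntRight b (1 - α) F s) (Set.Icc a b) := by
      refine monotoneOn_of_deriv_nonneg (convex_Icc a b) hIc hd ?_
      intro t ht; rw [hint] at ht; rw [hderiv0 t ht]
    have hanti : AntitoneOn (fun s => rlIntRight b (1 - α) F s) (Set.Icc a b) := by
      refine antitoneOn_of_deriv_nonpos (convex_Icc a b) hIc hd ?_
      intro t ht; rw [hint] at ht; rw [hderiv0 t ht]
    rcases le_total t₁ t₂ with h | h
    · exact le_antisymm (hmono ht₁ ht₂ h) (hanti ht₁ ht₂ h)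
    · exact le_antisymm (hanti ht₂ ht₁ h) (hmono ht₂ ht₁ h)
end

section
/- First variation formula for the Herglotz functional: under the hypotheses of the fractional Herglotz problem (n components, αⱼ ∈ (0,1)), for any admissible variation η with η(a) = 0, the quantity θ(b) = (d/dε) z[x+εη;b]|_{ε=0} satisfies θ(b)·λ(b) = ∫ₐᵇ λ(t) ∑ⱼ ( (∂L/∂xⱼ)[x,z](t)·ηⱼ(t) + (∂L/∂(ᶜₐD_t^{αⱼ}xⱼ))[x,z](t)·(ᶜₐD_t^{αⱼ}ηⱼ)(t) ) dt. -/
/-- First variation formula for the Herglotz functional: if `θ` is the rate of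
change of `z[x+εη;·]` at `ε = 0`, satisfying the linearized equation with
`θ(a) = 0`, then `θ(b)·λ(b)` equals the stated weighted integral. -/
theorem herglotz_first_variation (n : ℕ) (a b : ℝ) (hab : a < b)
    (α : Fin n → ℝ) (hα : ∀ j, α j ∈ Set.Ioo (0:ℝ) 1)
    (L : ℝ → (Fin n → ℝ) → (Fin n → ℝ) → ℝ → ℝ)
    (x η : ℝ → Fin n → ℝ) (z : ℝ → ℝ)
    (hx : ContDiffOn ℝ 1 (fun t => x t) (Set.Icc a b))
    (hη : ContDiffOn ℝ 1 (fun t => η t) (Set.Icc a b))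
    (hηa : η a = 0)
    (v : ℝ → Fin n → ℝ)
    (hv : ∀ t j, v t j = caputoDeriv a (α j) (fun s => x s j) t)
    (hvc : ∀ j, ContinuousOn (fun t => v t j) (Set.Icc a b))
    (hηc : ∀ j, ContinuousOn (fun t => caputoDeriv a (α j) (fun s => η s j) t) (Set.Icc a b))
    (hz : ∀ t ∈ Set.Icc a b, HasDerivAt z (L t (x t) (v t) (z t)) t)
    (Lx Lv : Fin n → ℝ → ℝ) (Lz : ℝ → ℝ)
    (hLx : ∀ j t, Lx j t
      = deriv (fun u => L t (Function.update (x t) j u) (v t) (z t)) (x t j))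
    (hLv : ∀ j t, Lv j t
      = deriv (fun w => L t (x t) (Function.update (v t) j w) (z t)) (v t j))
    (hLz : ∀ t, Lz t = deriv (fun w => L t (x t) (v t) w) (z t))
    (hLc : ContinuousOn Lz (Set.Icc a b))
    (hLxc : ∀ j, ContinuousOn (Lx j) (Set.Icc a b))
    (hLvc : ∀ j, ContinuousOn (Lv j) (Set.Icc a b))
    (lam : ℝ → ℝ) (hlam : ∀ t, lam t = Real.exp (-∫ τ in a..t, Lz τ))
    -- `θ` is the first variation, satisfying the linearized Herglotz ODE
    (θ : ℝ → ℝ) (hθa : θ a = 0)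
    (hθ : ∀ t ∈ Set.Icc a b,
      HasDerivAt θ (Lz t * θ t
        + ∑ j, (Lx j t * η t j
            + Lv j t * caputoDeriv a (α j) (fun s => η s j) t)) t) :
    θ b * lam b
      = ∫ t in a..b, lam t *
          ∑ j, (Lx j t * η t j
            + Lv j t * caputoDeriv a (α j) (fun s => η s j) t) := by
  set S : ℝ → ℝ := fun t => ∑ j, (Lx j t * η t j
      + Lv j t * caputoDeriv a (α j) (fun s => η s j) t) with hS
  have hlam' : lam = fun t => Real.exp (-∫ τ in a..t, Lz τ) := funext hlam
  set F : ℝ → ℝ := fun t => ∫ τ in a..t, Lz τ with hF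
  have hLint : MeasureTheory.IntegrableOn Lz (Set.Icc a b) :=
    hLc.integrableOn_Icc
  have hFcont : ContinuousOn F (Set.Icc a b) := by
    have := intervalIntegral.continuousOn_primitive_interval
      (f := Lz) (μ := MeasureTheory.volume) (a := a) (b := b)
      (by rwa [Set.uIcc_of_le hab.le])
    rwa [Set.uIcc_of_le hab.le] at this
  have hFd : ∀ t ∈ Set.Ioo a b, HasDerivAt F (Lz t) t := by
    intro t ht
    have hmem : Set.Icc a b ∈ nhds t := Icc_mem_nhds ht.1 ht.2
    have hct : ContinuousAt Lz t := hLc.continuousAt hmem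
    refine intervalIntegral.integral_hasDerivAt_right ?_ ⟨Set.Icc a b, hmem,
      hLc.aestronglyMeasurable measurableSet_Icc⟩ hct
    exact (hLc.mono (Set.Icc_subset_Icc le_rfl ht.2.le)).intervalIntegrable_of_Icc ht.1.le
  have hlamc : ContinuousOn lam (Set.Icc a b) := by
    rw [hlam']
    exact Real.continuous_exp.comp_continuousOn hFcont.neg
  have hlamd : ∀ t ∈ Set.Ioo a b, HasDerivAt lam (-(Lz t) * lam t) t := by
    intro t ht
    rw [hlam']
    have := ((hFd t ht).neg).exp
    simpa [mul_comm] using this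
  have hθc : ContinuousOn θ (Set.Icc a b) := fun t ht =>
    (hθ t ht).continuousAt.continuousWithinAt
  set g : ℝ → ℝ := fun t => θ t * lam t with hg
  have hgc : ContinuousOn g (Set.Icc a b) := hθc.mul hlamc
  have hgd : ∀ t ∈ Set.Ioo a b, HasDerivAt g (lam t * S t) t := by
    intro t ht
    have h1 := (hθ t (Set.Ioo_subset_Icc_self ht)).mul (hlamd t ht)
    have : (Lz t * θ t + S t) * lam t + θ t * (-(Lz t) * lam t) = lam t * S t := by
      ring
    rwa [this] at h1
  have hScont : ContinuousOn (fun t => lam t * S t) (Set.Icc a b) := by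
    refine hlamc.mul ?_
    refine continuousOn_finset_sum _ (fun j _ => ?_)
    exact ((hLxc j).mul ((continuous_apply j).comp_continuousOn hη.continuousOn)).add
      ((hLvc j).mul (hηc j))
  have hint : IntervalIntegrable (fun t => lam t * S t) MeasureTheory.volume a b :=
    hScont.intervalIntegrable_of_Icc hab.le
  have key := intervalIntegral.integral_eq_sub_of_hasDerivAt_of_le hab.le hgc hgd hint
  have : g b - g a = θ b * lam b := by
    simp [hg, hθa]
  rw [key, this]
end
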